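/- arXiv:2412.05519 — 4 statements merged into one kernel-verified Lean document; each statement's English description precedes it below -/
import Mathlib

section
/- Let ℐ be an object ideal of an additive category 𝒜. Then ℐ is precovering if and only if Ob(ℐ) is precovering. -/
/-! Every morphism out of an object of `Ob ℐ` lies in `ℐ`, and every morphism of the object ideal
`ℐ` factors through `Ob ℐ`. Hence the second factor of an `ℐ`-precover is an `Ob ℐ`-precover, and
an `Ob ℐ`-precover is already an `ℐ`-precover. -/

open CategoryTheory Limits

universe v u

variable (C : Type u) [Category.{v} C] [Preadditive C] [HasFiniteBiproducts C]

/-- An ideal of an additive category: an additive subgroup of each Hom-group,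
closed under composition with arbitrary morphisms on both sides. -/
structure CatIdeal where
  carrier : ∀ (A B : C), AddSubgroup (A ⟶ B)
  comp_mem : ∀ ⦃X A B Y : C⦄ (h : X ⟶ A) (g : A ⟶ B) (f : B ⟶ Y),
    g ∈ carrier A B → h ≫ g ≫ f ∈ carrier X Y

variable {C}

/-- The objects of an ideal: those objects whose identity morphism belongs to the ideal. -/
def CatIdeal.Ob (I : CatIdeal C) : Set C := {A | 𝟙 A ∈ I.carrier A A}

/-- An ideal is an object ideal if every morphism in it factors through one of its objects. -/
def CatIdeal.IsObjectIdeal (I : CatIdeal C) : Prop :=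
  ∀ ⦃A B : C⦄, ∀ g ∈ I.carrier A B,
    ∃ (X : C) (u : A ⟶ X) (v : X ⟶ B), X ∈ I.Ob ∧ u ≫ v = g

/-- `f : X ⟶ A` is an `I`-precover of `A`. -/
def CatIdeal.IsPrecover (I : CatIdeal C) {X A : C} (f : X ⟶ A) : Prop :=
  f ∈ I.carrier X A ∧
    ∀ ⦃X' : C⦄ (f' : X' ⟶ A), f' ∈ I.carrier X' A → ∃ g : X' ⟶ X, g ≫ f = f'

/-- `f : X ⟶ A` is an `I`-cover of `A`. -/
def CatIdeal.IsCover (I : CatIdeal C) {X A : C} (f : X ⟶ A) : Prop :=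
  I.IsPrecover f ∧ ∀ g : X ⟶ X, g ≫ f = f → IsIso g

/-- `f : A ⟶ X` is an `I`-preenvelope of `A`. -/
def CatIdeal.IsPreenvelope (I : CatIdeal C) {A X : C} (f : A ⟶ X) : Prop :=
  f ∈ I.carrier A X ∧
    ∀ ⦃X' : C⦄ (f' : A ⟶ X'), f' ∈ I.carrier A X' → ∃ g : X ⟶ X', f ≫ g = f'

/-- `f : A ⟶ X` is an `I`-envelope of `A`. -/
def CatIdeal.IsEnvelope (I : CatIdeal C) {A X : C} (f : A ⟶ X) : Prop :=
  I.IsPreenvelope f ∧ ∀ g : X ⟶ X, f ≫ g = f → IsIso g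

def CatIdeal.Precovering (I : CatIdeal C) : Prop :=
  ∀ A : C, ∃ (X : C) (f : X ⟶ A), I.IsPrecover f

def CatIdeal.Covering (I : CatIdeal C) : Prop :=
  ∀ A : C, ∃ (X : C) (f : X ⟶ A), I.IsCover f

def CatIdeal.Preenveloping (I : CatIdeal C) : Prop :=
  ∀ A : C, ∃ (X : C) (f : A ⟶ X), I.IsPreenvelope f

def CatIdeal.Enveloping (I : CatIdeal C) : Prop :=
  ∀ A : C, ∃ (X : C) (f : A ⟶ X), I.IsEnvelope f

/-- `f : X ⟶ A` is an `𝒳`-precover of `A`, for a class of objects `𝒳`. -/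
def Set.IsClassPrecover (𝒳 : Set C) {X A : C} (f : X ⟶ A) : Prop :=
  X ∈ 𝒳 ∧ ∀ ⦃X' : C⦄, X' ∈ 𝒳 → ∀ f' : X' ⟶ A, ∃ g : X' ⟶ X, g ≫ f = f'

def Set.IsClassCover (𝒳 : Set C) {X A : C} (f : X ⟶ A) : Prop :=
  𝒳.IsClassPrecover f ∧ ∀ g : X ⟶ X, g ≫ f = f → IsIso g

/-- `f : A ⟶ X` is an `𝒳`-preenvelope of `A`, for a class of objects `𝒳`. -/
def Set.IsClassPreenvelope (𝒳 : Set C) {A X : C} (f : A ⟶ X) : Prop :=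
  X ∈ 𝒳 ∧ ∀ ⦃X' : C⦄, X' ∈ 𝒳 → ∀ f' : A ⟶ X', ∃ g : X ⟶ X', f ≫ g = f'

def Set.IsClassEnvelope (𝒳 : Set C) {A X : C} (f : A ⟶ X) : Prop :=
  𝒳.IsClassPreenvelope f ∧ ∀ g : X ⟶ X, f ≫ g = f → IsIso g

def Set.ClassPrecovering (𝒳 : Set C) : Prop :=
  ∀ A : C, ∃ (X : C) (f : X ⟶ A), 𝒳.IsClassPrecover f

def Set.ClassCovering (𝒳 : Set C) : Prop :=
  ∀ A : C, ∃ (X : C) (f : X ⟶ A), 𝒳.IsClassCover f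

def Set.ClassPreenveloping (𝒳 : Set C) : Prop :=
  ∀ A : C, ∃ (X : C) (f : A ⟶ X), 𝒳.IsClassPreenvelope f

def Set.ClassEnveloping (𝒳 : Set C) : Prop :=
  ∀ A : C, ∃ (X : C) (f : A ⟶ X), 𝒳.IsClassEnvelope f

namespace CatIdeal

variable {𝒜 : Type*} [Category 𝒜] [Preadditive 𝒜] {I : CatIdeal 𝒜}

theorem mem_of_mem_Ob {X A : 𝒜} (hX : X ∈ I.Ob) (f : X ⟶ A) : f ∈ I.carrier X A := by
  simpa using I.comp_mem (𝟙 X) (𝟙 X) f hX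

theorem IsPrecover.isClassPrecover_of_comp {X Y A : 𝒜} {u : X ⟶ Y} {v : Y ⟶ A}
    (hY : Y ∈ I.Ob) (hf : I.IsPrecover (u ≫ v)) : I.Ob.IsClassPrecover v := by
  refine ⟨hY, fun X' hX' f' => ?_⟩
  obtain ⟨g, hg⟩ := hf.2 f' (mem_of_mem_Ob hX' f')
  exact ⟨g ≫ u, by rw [Category.assoc, hg]⟩

theorem isPrecover_of_isClassPrecover (hI : I.IsObjectIdeal) {X A : 𝒜} {f : X ⟶ A}
    (hf : I.Ob.IsClassPrecover f) : I.IsPrecover f := by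
  refine ⟨mem_of_mem_Ob hf.1 f, fun X' f' hf' => ?_⟩
  obtain ⟨Y, u, v, hY, rfl⟩ := hI f' hf'
  obtain ⟨g, hg⟩ := hf.2 hY v
  exact ⟨u ≫ g, by rw [Category.assoc, hg]⟩

end CatIdeal

/-- an object ideal is precovering iff its class of objects is precovering. -/
theorem precovering_iff_ob_precovering (I : CatIdeal C) (hI : I.IsObjectIdeal) :
    I.Precovering ↔ I.Ob.ClassPrecovering := by
  constructor
  · intro h A
    obtain ⟨X, f, hf⟩ := h A
    obtain ⟨Y, u, v, hY, rfl⟩ := hI f hf.1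
    exact ⟨Y, v, hf.isClassPrecover_of_comp hY⟩
  · intro h A
    obtain ⟨X, f, hf⟩ := h A
    exact ⟨X, f, CatIdeal.isPrecover_of_isClassPrecover hI hf⟩
end

section
/- Let ℐ be an object ideal of an additive category 𝒜. Then ℐ is preenveloping if and only if Ob(ℐ) is preenveloping. -/
open CategoryTheory Limits

universe v u

variable (C : Type u) [Category.{v} C] [Preadditive C] [HasFiniteBiproducts C]

variable {C}

/-! A morphism of an object ideal `I` lies in `I` exactly when it factors through an object of
`Ob I`. So factoring an `I`-preenvelope through an object of `Ob I` yields an `Ob I`-preenvelope,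
and conversely an `Ob I`-preenvelope lies in `I` and, since every morphism of `I` factors through
`Ob I`, is an `I`-preenvelope. -/

namespace CatIdeal

omit [HasFiniteBiproducts C]

theorem mem_of_mem_ob (I : CatIdeal C) {A X : C} (hX : X ∈ I.Ob) (u : A ⟶ X) :
    u ∈ I.carrier A X := by
  simpa using I.comp_mem u (𝟙 X) (𝟙 X) hX

theorem IsPreenvelope.isClassPreenvelope_of_comp_eq {I : CatIdeal C} {A X Y : C} {f : A ⟶ X}
    (hf : I.IsPreenvelope f) {u : A ⟶ Y} {v : Y ⟶ X} (hY : Y ∈ I.Ob) (huv : u ≫ v = f) :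
    I.Ob.IsClassPreenvelope u := by
  refine ⟨hY, fun X' hX' f' => ?_⟩
  obtain ⟨g, hg⟩ := hf.2 f' (I.mem_of_mem_ob hX' f')
  exact ⟨v ≫ g, by rw [← Category.assoc, huv, hg]⟩

theorem IsObjectIdeal.isPreenvelope_of_isClassPreenvelope {I : CatIdeal C} (hI : I.IsObjectIdeal)
    {A Y : C} {e : A ⟶ Y} (he : I.Ob.IsClassPreenvelope e) : I.IsPreenvelope e := by
  refine ⟨I.mem_of_mem_ob he.1 e, fun X' f' hf' => ?_⟩
  obtain ⟨Z, u, v, hZ, huv⟩ := hI f' hf'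
  obtain ⟨g, hg⟩ := he.2 hZ u
  exact ⟨g ≫ v, by rw [← Category.assoc, hg, huv]⟩

end CatIdeal

/-- an object ideal is preenveloping iff its class of objects is preenveloping. -/
theorem preenveloping_iff_ob_preenveloping (I : CatIdeal C) (hI : I.IsObjectIdeal) :
    I.Preenveloping ↔ I.Ob.ClassPreenveloping := by
  constructor
  · intro h A
    obtain ⟨X, f, hf⟩ := h A
    obtain ⟨Y, u, v, hY, huv⟩ := hI f hf.1
    exact ⟨Y, u, hf.isClassPreenvelope_of_comp_eq hY huv⟩
  · intro h A
    obtain ⟨Y, e, he⟩ := h A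
    exact ⟨Y, e, hI.isPreenvelope_of_isClassPreenvelope he⟩
end

section
/- Let ℐ be an object ideal of an additive category 𝒜. Then ℐ is enveloping if and only if Ob(ℐ) is enveloping. Moreover, in the 'only if' direction, the codomain of any ℐ-envelope of an object A belongs to Ob(ℐ). -/
open CategoryTheory Limits

universe v u

variable (C : Type u) [Category.{v} C] [Preadditive C] [HasFiniteBiproducts C]

variable {C}

/-!
Since `I` is an object ideal, a morphism lies in `I` exactly when it factors through an object
of `Ob(I)`. Hence `Ob(I)`-preenvelopes and `I`-preenvelopes with codomain in `Ob(I)` are the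
same thing. The only point is that the codomain `X` of an `I`-envelope `f` lies in `Ob(I)`:
factor `f = u ≫ v` through `Y ∈ Ob(I)`, and `u = f ≫ g` by the preenvelope property; then
`f ≫ (g ≫ v) = f`, so `g ≫ v` is invertible by minimality and `X` is a retract of `Y`.
-/

namespace CatIdeal

variable {𝒜 : Type*} [Category 𝒜] [Preadditive 𝒜] {I : CatIdeal 𝒜}

theorem mem_carrier_of_mem_Ob {A X : 𝒜} (hX : X ∈ I.Ob) (f : A ⟶ X) : f ∈ I.carrier A X := by
  simpa using I.comp_mem f (𝟙 X) (𝟙 X) hX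

theorem mem_Ob_of_retract {X Y : 𝒜} (h : Retract X Y) (hY : Y ∈ I.Ob) : X ∈ I.Ob := by
  have := I.comp_mem h.i (𝟙 Y) h.r hY
  rwa [Category.id_comp, h.retract] at this

theorem IsEnvelope.cod_mem_Ob (hI : I.IsObjectIdeal) {A X : 𝒜} {f : A ⟶ X}
    (hf : I.IsEnvelope f) : X ∈ I.Ob := by
  obtain ⟨Y, u, v, hY, rfl⟩ := hI f hf.1.1
  obtain ⟨g, hg⟩ := hf.1.2 u (mem_carrier_of_mem_Ob hY u)
  have : IsIso (g ≫ v) := hf.2 (g ≫ v) (by rw [← Category.assoc, hg])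
  exact mem_Ob_of_retract ⟨g, v ≫ inv (g ≫ v), by rw [← Category.assoc, IsIso.hom_inv_id]⟩ hY

theorem IsPreenvelope.isClassPreenvelope {A X : 𝒜} {f : A ⟶ X} (hf : I.IsPreenvelope f)
    (hX : X ∈ I.Ob) : I.Ob.IsClassPreenvelope f :=
  ⟨hX, fun _ hX' f' => hf.2 f' (mem_carrier_of_mem_Ob hX' f')⟩

theorem isPreenvelope_of_isClassPreenvelope (hI : I.IsObjectIdeal) {A X : 𝒜} {f : A ⟶ X}
    (hf : I.Ob.IsClassPreenvelope f) : I.IsPreenvelope f := by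
  refine ⟨mem_carrier_of_mem_Ob hf.1 f, fun _ f' hf' => ?_⟩
  obtain ⟨Y, u, v, hY, rfl⟩ := hI f' hf'
  obtain ⟨g, hg⟩ := hf.2 hY u
  exact ⟨g ≫ v, by rw [← Category.assoc, hg]⟩

theorem isEnvelope_iff_isClassEnvelope (hI : I.IsObjectIdeal) {A X : 𝒜} (f : A ⟶ X) :
    I.IsEnvelope f ↔ I.Ob.IsClassEnvelope f :=
  ⟨fun hf => ⟨hf.1.isClassPreenvelope (hf.cod_mem_Ob hI), hf.2⟩,
    fun hf => ⟨isPreenvelope_of_isClassPreenvelope hI hf.1, hf.2⟩⟩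

end CatIdeal

/-- an object ideal is enveloping iff its class of objects is enveloping;
moreover, if `I` is enveloping then the codomain of any `I`-envelope lies in `Ob(I)`. -/
theorem enveloping_iff_ob_enveloping (I : CatIdeal C) (hI : I.IsObjectIdeal) :
    (I.Enveloping ↔ I.Ob.ClassEnveloping) ∧
      (I.Enveloping → ∀ ⦃A X : C⦄ (f : A ⟶ X), I.IsEnvelope f → X ∈ I.Ob) :=
  ⟨forall_congr' fun _ => exists_congr fun _ => exists_congr fun f =>
      CatIdeal.isEnvelope_iff_isClassEnvelope hI f,
    fun _ _ _ _ => CatIdeal.IsEnvelope.cod_mem_Ob hI⟩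
end

section
/- Let R be an associative unital ring and 𝒳 a class of left R-modules closed under isomorphisms. If 𝒳 is enveloping, then 𝒳 is closed under direct summands: whenever M ∈ 𝒳 and N is a direct summand of M, then N ∈ 𝒳. -/
open CategoryTheory Limits

universe u

variable {R : Type u} [Ring R]

/-- `f : M ⟶ X` is an `𝒳`-preenvelope of `M`, for a class of modules `𝒳`. -/
def IsClassPreenvelope (𝒳 : Set (ModuleCat.{u} R)) {M X : ModuleCat.{u} R} (f : M ⟶ X) : Prop :=
  X ∈ 𝒳 ∧ ∀ ⦃X' : ModuleCat.{u} R⦄, X' ∈ 𝒳 → ∀ f' : M ⟶ X', ∃ g : X ⟶ X', f ≫ g = f'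

/-- `f : M ⟶ X` is an `𝒳`-envelope of `M`. -/
def IsClassEnvelope (𝒳 : Set (ModuleCat.{u} R)) {M X : ModuleCat.{u} R} (f : M ⟶ X) : Prop :=
  IsClassPreenvelope 𝒳 f ∧ ∀ g : X ⟶ X, f ≫ g = f → IsIso g

/-- `𝒳` is enveloping: every module has an `𝒳`-envelope. -/
def ClassEnveloping (𝒳 : Set (ModuleCat.{u} R)) : Prop :=
  ∀ M : ModuleCat.{u} R, ∃ (X : ModuleCat.{u} R) (f : M ⟶ X), IsClassEnvelope 𝒳 f

/-!
Let `f : N ⟶ X` be an `𝒳`-envelope of `N`. The split mono `i : N ⟶ M` into `M ∈ 𝒳` factors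
through `f`, so `f` has a retraction `r`. Then `r ≫ f` is an endomorphism of `X` fixing `f`,
hence an isomorphism by minimality of the envelope, and this forces `f` itself to be an
isomorphism, so `N ≅ X ∈ 𝒳`.
-/

/-- `r ≫ f` is idempotent because `f ≫ r = 𝟙`, and an idempotent isomorphism is the identity. -/
theorem isIso_of_comp_eq_id_of_isIso_comp {C : Type*} [Category C] {X Y : C} {f : X ⟶ Y}
    {r : Y ⟶ X} (hfr : f ≫ r = 𝟙 X) (hrf : IsIso (r ≫ f)) : IsIso f := by
  have hidem : (r ≫ f) ≫ (r ≫ f) = (r ≫ f) ≫ 𝟙 Y := by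
    rw [Category.assoc, ← Category.assoc f, hfr, Category.id_comp, Category.comp_id]
  exact ⟨r, hfr, (cancel_epi (r ≫ f)).1 hidem⟩

theorem IsClassEnvelope.isIso_of_comp_eq_id {𝒳 : Set (ModuleCat.{u} R)} {N X : ModuleCat.{u} R}
    {f : N ⟶ X} (hf : IsClassEnvelope 𝒳 f) {r : X ⟶ N} (hfr : f ≫ r = 𝟙 N) : IsIso f :=
  isIso_of_comp_eq_id_of_isIso_comp hfr <| hf.2 _ <| by rw [← Category.assoc, hfr, Category.id_comp]

theorem IsClassPreenvelope.exists_comp_eq_id_of_retract {𝒳 : Set (ModuleCat.{u} R)}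
    {N M X : ModuleCat.{u} R} {f : N ⟶ X} (hf : IsClassPreenvelope 𝒳 f) (hM : M ∈ 𝒳)
    {i : N ⟶ M} {p : M ⟶ N} (hip : i ≫ p = 𝟙 N) : ∃ r : X ⟶ N, f ≫ r = 𝟙 N := by
  obtain ⟨g, hg⟩ := hf.2 hM i
  exact ⟨g ≫ p, by rw [← Category.assoc, hg, hip]⟩

/-- an enveloping class of left `R`-modules closed under isomorphisms is
closed under direct summands. -/
theorem enveloping_class_closed_under_direct_summands (𝒳 : Set (ModuleCat.{u} R))
    (hiso : ∀ ⦃M N : ModuleCat.{u} R⦄, (M ≅ N) → M ∈ 𝒳 → N ∈ 𝒳)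
    (henv : ClassEnveloping 𝒳) :
    ∀ ⦃M N : ModuleCat.{u} R⦄, M ∈ 𝒳 →
      (∃ (i : N ⟶ M) (p : M ⟶ N), i ≫ p = 𝟙 N) → N ∈ 𝒳 := by
  rintro M N hM ⟨i, p, hip⟩
  obtain ⟨X, f, hf⟩ := henv N
  obtain ⟨r, hfr⟩ := hf.1.exists_comp_eq_id_of_retract hM hip
  have : IsIso f := hf.isIso_of_comp_eq_id hfr
  exact hiso (asIso f).symm hf.1.1
end
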